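/- arXiv:2306.03611 — 3 statements merged into one kernel-verified Lean document; each statement's English description precedes it below -/
import Mathlib

section
/- Let k = 2k′ with k′ > 1 be an even integer and let z = (i_j)_{j∈ℤ} ∈ Σ_A. For each ordered pair p ≠ q in G₀ let w_{p,q} = (p,q,p,q,…,p,q) be the alternating word of length k. Suppose that for every ordered pair p ≠ q the limit f_{p,q} = lim_{n→∞} |(i_0, i_1, …, i_{n−1})|_{w_{p,q}} / n exists, and that the sum of f_{p,q} over all ordered pairs p ≠ q is < 1/2. Then there exists an integer t₀ ≥ 0 such that for every integer t ≥ t₀, the number of indices j with 0 ≤ j ≤ (t−1)k for which the window (i_j, i_{j+1}, …, i_{j+k−1}) contains at least three distinct symbols is at least tk/2 − k. -/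
open Filter Topology

private lemma alt_lemma {k₀ : ℕ} (z : ℤ → Fin k₀) (hz : ∀ j : ℤ, z j ≠ z (j + 1))
    {k : ℕ} (hk : 2 ≤ k) (j : ℤ)
    (h : ¬ 3 ≤ ((Finset.range k).image (fun r : ℕ => z (j + (r : ℤ)))).card) :
    ∀ r < k, z (j + r) = if r % 2 = 0 then z j else z (j + 1) := by
  push_neg at h
  set S := (Finset.range k).image (fun r : ℕ => z (j + (r : ℤ))) with hS
  have hp : z j ∈ S := by
    have : z (j + ((0:ℕ):ℤ)) ∈ S :=
      Finset.mem_image_of_mem _ (Finset.mem_range.2 (by omega))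
    simpa using this
  have hq : z (j + 1) ∈ S := by
    have : z (j + ((1:ℕ):ℤ)) ∈ S :=
      Finset.mem_image_of_mem _ (Finset.mem_range.2 (by omega))
    simpa using this
  have hpq : z j ≠ z (j + 1) := hz j
  have hsub : ({z j, z (j+1)} : Finset (Fin k₀)) ⊆ S := by
    intro x hx
    simp only [Finset.mem_insert, Finset.mem_singleton] at hx
    rcases hx with h1 | h1 <;> simp [h1, hp, hq]
  have hcard : ({z j, z (j+1)} : Finset (Fin k₀)).card = 2 := by
    rw [Finset.card_insert_of_notMem (by simpa using hpq), Finset.card_singleton]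
  have hSeq : S = {z j, z (j+1)} :=
    Finset.eq_of_subset_of_card_le (s := ({z j, z (j+1)} : Finset (Fin k₀))) (t := S) hsub
      (by rw [hcard]; omega) |>.symm
  have hmem : ∀ r < k, z (j + r) = z j ∨ z (j + r) = z (j + 1) := by
    intro r hr
    have : z (j + (r:ℤ)) ∈ S := Finset.mem_image_of_mem _ (Finset.mem_range.2 hr)
    rw [hSeq] at this
    simpa using this
  intro r
  induction r with
  | zero => intro _; simp
  | succ n ih =>
    intro hn
    have hn' : n < k := by omega
    have h1 := ih hn'
    have h2 := hmem (n+1) hn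
    have h3 : z (j + ((n+1 : ℕ) : ℤ)) ≠ z (j + (n:ℤ)) := by
      have := hz (j + n)
      intro hEq
      apply this
      rw [← hEq]
      congr 1
      push_cast
      ring
    rcases Nat.mod_two_eq_zero_or_one n with hpar | hpar
    · have hpar' : (n+1) % 2 = 1 := by omega
      rw [hpar'] ; simp only [one_ne_zero, if_false]
      rw [hpar] at h1; simp only [if_pos rfl] at h1
      rcases h2 with h2 | h2
      · exact absurd (h2.trans h1.symm) h3
      · exact h2
    · have hpar' : (n+1) % 2 = 0 := by omega
      rw [hpar'] ; simp only [if_pos rfl]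
      rw [hpar] at h1; simp only [one_ne_zero, if_false] at h1
      rcases h2 with h2 | h2
      · exact h2
      · exact absurd (h2.trans h1.symm) h3

/-- If `z ∈ Σ_A` is such that, for each ordered pair `p ≠ q`, the frequency of the
alternating word `w_{p,q} = (p,q,…,p,q)` of even length `k = 2k'` (`k' > 1`) in
`(i_0,…,i_{n-1})` exists, and the sum of these frequencies is `< 1/2`, then there is
`t₀` such that for all `t ≥ t₀` the number of indices `0 ≤ j ≤ (t-1)k` whose window
`(i_j, …, i_{j+k-1})` contains at least three distinct symbols is at least `tk/2 - k`. -/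
theorem stmt2 (k₀ : ℕ) (hk₀ : 3 ≤ k₀)
    (z : ℤ → Fin k₀) (hz : ∀ j : ℤ, z j ≠ z (j + 1))
    (k' : ℕ) (hk' : 1 < k') (k : ℕ) (hkk : k = 2 * k')
    (f : Fin k₀ → Fin k₀ → ℝ)
    (hf : ∀ p q : Fin k₀, p ≠ q →
      Tendsto (fun n : ℕ =>
        (((Finset.Icc (0 : ℤ) ((n : ℤ) - k)).filter
            (fun j => ∀ r < k, z (j + r) = if r % 2 = 0 then p else q)).card : ℝ) / n)
        atTop (𝓝 (f p q)))
    (hsum : ∑ p : Fin k₀, ∑ q : Fin k₀, (if p ≠ q then f p q else 0) < 1 / 2) :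
    ∃ t₀ : ℕ, ∀ t : ℕ, t₀ ≤ t →
      (t : ℝ) * k / 2 - k ≤
        (((Finset.Icc (0 : ℤ) (((t : ℤ) - 1) * k)).filter
            (fun j => 3 ≤ ((Finset.range k).image (fun r : ℕ => z (j + (r : ℤ)))).card)).card : ℝ) := by
  have hk2 : 2 ≤ k := by omega
  have hkpos : 0 < k := by omega
  -- counting sets
  set B : Fin k₀ → Fin k₀ → ℕ → Finset ℤ := fun p q n =>
    (Finset.Icc (0 : ℤ) ((n : ℤ) - k)).filter
      (fun j => ∀ r < k, z (j + r) = if r % 2 = 0 then p else q) with hB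
  -- tendsto of each term
  have hT : ∀ p q : Fin k₀, Tendsto
      (fun n : ℕ => if p ≠ q then ((B p q n).card : ℝ) / n else 0) atTop
      (𝓝 (if p ≠ q then f p q else 0)) := by
    intro p q
    by_cases h : p ≠ q
    · simpa [h] using hf p q h
    · simp [h]
  have hTsum : Tendsto
      (fun n : ℕ => ∑ p : Fin k₀, ∑ q : Fin k₀,
        (if p ≠ q then ((B p q n).card : ℝ) / n else 0)) atTop
      (𝓝 (∑ p : Fin k₀, ∑ q : Fin k₀, (if p ≠ q then f p q else 0))) :=
    tendsto_finset_sum _ fun p _ => tendsto_finset_sum _ fun q _ => hT p q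
  have hmul : Tendsto (fun t : ℕ => t * k) atTop atTop :=
    tendsto_atTop_atTop.2 fun b => ⟨b, fun a ha => le_trans ha (Nat.le_mul_of_pos_right a hkpos)⟩
  have hcomp := (hTsum.comp hmul).eventually_lt_const hsum
  obtain ⟨n₀, hn₀⟩ := eventually_atTop.1 hcomp
  refine ⟨max n₀ 1, fun t ht => ?_⟩
  have ht1 : 1 ≤ t := le_trans (le_max_right _ _) ht
  have htn : n₀ ≤ t := le_trans (le_max_left _ _) ht
  have hlt := hn₀ t htn
  simp only [Function.comp] at hlt
  -- rewrite sum of quotients as quotient of sum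
  have htkpos : (0:ℝ) < (t*k : ℕ) := by positivity
  have hsum_div : ∑ p : Fin k₀, ∑ q : Fin k₀,
      (if p ≠ q then ((B p q (t*k)).card : ℝ) / (t*k : ℕ) else 0)
      = (∑ p : Fin k₀, ∑ q : Fin k₀, (if p ≠ q then ((B p q (t*k)).card : ℝ) else 0)) / (t*k : ℕ) := by
    rw [Finset.sum_div]
    refine Finset.sum_congr rfl fun p _ => ?_
    rw [Finset.sum_div]
    refine Finset.sum_congr rfl fun q _ => ?_
    by_cases h : p ≠ q <;> simp [h]
  rw [hsum_div, div_lt_iff₀ htkpos] at hlt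
  set N : ℝ := ∑ p : Fin k₀, ∑ q : Fin k₀, (if p ≠ q then ((B p q (t*k)).card : ℝ) else 0) with hN
  have hNlt : N < (t : ℝ) * k / 2 := by
    have : ((t*k : ℕ) : ℝ) = (t:ℝ) * k := by push_cast; ring
    rw [this] at hlt
    linarith
  -- combinatorics
  set A := (Finset.Icc (0 : ℤ) (((t : ℤ) - 1) * k)).filter
      (fun j => 3 ≤ ((Finset.range k).image (fun r : ℕ => z (j + (r : ℤ)))).card) with hA
  set A' := (Finset.Icc (0 : ℤ) (((t : ℤ) - 1) * k)).filter
      (fun j => ¬ 3 ≤ ((Finset.range k).image (fun r : ℕ => z (j + (r : ℤ)))).card) with hA'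
  have hsplit : A.card + A'.card = (Finset.Icc (0 : ℤ) (((t : ℤ) - 1) * k)).card :=
    Finset.card_filter_add_card_filter_not _
  have hIcc : ((Finset.Icc (0 : ℤ) (((t : ℤ) - 1) * k)).card : ℝ) = ((t:ℝ) - 1) * k + 1 := by
    have h0 : (0:ℤ) ≤ ((t : ℤ) - 1) * k := by
      apply mul_nonneg
      · omega
      · positivity
    have hnn : (0:ℤ) ≤ ((t:ℤ) - 1) * k + 1 := by linarith
    have key : (((((t:ℤ) - 1) * k + 1).toNat : ℕ) : ℤ) = ((t:ℤ) - 1) * k + 1 :=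
      Int.toNat_of_nonneg hnn
    have key2 : (((((t:ℤ) - 1) * k + 1).toNat : ℕ) : ℝ) = ((t:ℝ) - 1) * k + 1 := by
      rw [← Int.cast_natCast (R := ℝ), key]
      push_cast
      ring
    rw [Int.card_Icc,
      show ((t:ℤ) - 1) * k + 1 - 0 = ((t:ℤ) - 1) * k + 1 from by ring, key2]
  -- A' is covered by the B sets
  have hcov : A' ⊆ (Finset.univ ×ˢ Finset.univ).biUnion
      (fun pq : Fin k₀ × Fin k₀ => if pq.1 ≠ pq.2 then B pq.1 pq.2 (t*k) else ∅) := by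
    intro j hj
    rw [hA', Finset.mem_filter] at hj
    obtain ⟨hjI, hj3⟩ := hj
    have halt := alt_lemma z hz hk2 j hj3
    refine Finset.mem_biUnion.2 ⟨(z j, z (j+1)), Finset.mem_product.2 ⟨Finset.mem_univ _, Finset.mem_univ _⟩, ?_⟩
    rw [if_pos (hz j)]
    rw [hB]
    refine Finset.mem_filter.2 ⟨?_, halt⟩
    have : ((t*k : ℕ) : ℤ) - k = ((t : ℤ) - 1) * k := by push_cast; ring
    rw [this]
    exact hjI
  have hA'le : (A'.card : ℝ) ≤ N := by
    have h1 : A'.card ≤ ∑ pq ∈ Finset.univ ×ˢ Finset.univ,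
        (if pq.1 ≠ pq.2 then B pq.1 pq.2 (t*k) else ∅).card :=
      le_trans (Finset.card_le_card hcov) (Finset.card_biUnion_le)
    have h2 : ∑ pq ∈ Finset.univ ×ˢ Finset.univ,
        ((if pq.1 ≠ pq.2 then B pq.1 pq.2 (t*k) else ∅).card : ℝ) = N := by
      rw [hN, Finset.sum_product]
      refine Finset.sum_congr rfl fun p _ => Finset.sum_congr rfl fun q _ => ?_
      by_cases h : p ≠ q <;> simp [h]
    calc (A'.card : ℝ) ≤ ∑ pq ∈ Finset.univ ×ˢ Finset.univ,
          ((if pq.1 ≠ pq.2 then B pq.1 pq.2 (t*k) else ∅).card : ℝ) := by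
          exact_mod_cast h1
      _ = N := h2
  have hcards : (A.card : ℝ) + A'.card = ((t:ℝ) - 1) * k + 1 := by
    rw [← hIcc]; exact_mod_cast hsplit
  have hkr : (1:ℝ) ≤ (t:ℝ) := by exact_mod_cast ht1
  have hkR : (0:ℝ) < k := by exact_mod_cast hkpos
  have : (t : ℝ) * k / 2 - k ≤ (A.card : ℝ) := by linarith
  exact this
end

section
/- Let d₀ ∈ (0,1] and s > 0 with e^s ≤ 1 + d₀. Let (d_i)_{i≥1} and (a_i)_{i≥1} be real sequences with d₀ ≤ d_i ≤ 1, a_i > 0 and a_i d_i ≥ 1 for all i, and set b_i = 1 + a_i d_i. Let I be a set of positive integers and let (ã_i), (b̃_i) be sequences with ã_i = a_i and b̃_i = b_i for i ∉ I, and ã_i ≥ e^s a_i and b̃_i ≥ e^s b_i for i ∈ I. Let i₀ ≥ 1 be an integer with {1,…,i₀} ∩ I = ∅ and i₀ + 1 ∈ I. Define (Δ²_j), (Δ⁴_j) from (d_i, a_i, b_i) and (Δ̃²_j), (Δ̃⁴_j) from (d_i, ã_i, b̃_i) by the recurrences in the context. Then there exist sequences (t_i)_{i>i₀} and (s_i)_{i≥i₀}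 of nonnegative real numbers with s_{i₀} = 0 such that, setting u_{i₀} = 1, u_{i+1} = e^{t_{i+1}} u_i and v_i = e^{s_i} u_i for i ≥ i₀, the following hold: u_i ≥ 1 for all i ≥ i₀; Δ̃²_i ≥ u_i Δ²_i and Δ̃⁴_i ≥ v_i Δ⁴_i for all i ≥ i₀; t_{i+1} ≤ s_i for all i > i₀; and s_i ≥ s/2 for every i ∈ I with i > i₀. -/
open Classical in
/-- Auxiliary recursively-defined pair `(u_n, e^{s'_n})` (indices shifted by `i₀`). -/
noncomputable def stmt12aux (i₀ : ℕ) (s : ℝ) (I : Set ℕ) (d a b Δ2 Δ4 : ℕ → ℝ) : ℕ → ℝ × ℝ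
  | 0 => (1, 1)
  | n + 1 =>
    ((stmt12aux i₀ s I d a b Δ2 Δ4 n).1 *
        (Δ2 (i₀ + n) + d (i₀ + n + 1) * (stmt12aux i₀ s I d a b Δ2 Δ4 n).2 * Δ4 (i₀ + n)) /
        (Δ2 (i₀ + n) + d (i₀ + n + 1) * Δ4 (i₀ + n)),
      (if i₀ + n + 1 ∈ I then Real.exp s else 1) *
        (a (i₀ + n + 1) * Δ2 (i₀ + n) +
          b (i₀ + n + 1) * (stmt12aux i₀ s I d a b Δ2 Δ4 n).2 * Δ4 (i₀ + n)) *
        (Δ2 (i₀ + n) + d (i₀ + n + 1) * Δ4 (i₀ + n)) /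
        ((Δ2 (i₀ + n) + d (i₀ + n + 1) * (stmt12aux i₀ s I d a b Δ2 Δ4 n).2 * Δ4 (i₀ + n)) *
          (a (i₀ + n + 1) * Δ2 (i₀ + n) + b (i₀ + n + 1) * Δ4 (i₀ + n))))

set_option maxHeartbeats 1600000

/-- Lemma 3.5: comparison of the tilded and untilded `Δ`-sequences via sequences
`u_i = e^{t_{i₀+1} + ⋯ + t_i}` and `v_i = e^{s_i} u_i`. -/
theorem stmt12 (d₀ s : ℝ) (hd₀ : 0 < d₀) (hd₀1 : d₀ ≤ 1) (hs : 0 < s)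
    (hes : Real.exp s ≤ 1 + d₀)
    (d a : ℕ → ℝ)
    (hd : ∀ i, 1 ≤ i → d₀ ≤ d i ∧ d i ≤ 1)
    (ha : ∀ i, 1 ≤ i → 0 < a i ∧ 1 ≤ a i * d i)
    (b : ℕ → ℝ) (hb : ∀ i, b i = 1 + a i * d i)
    (I : Set ℕ) (hI : ∀ i ∈ I, 1 ≤ i)
    (ta tb : ℕ → ℝ)
    (htab_out : ∀ i, 1 ≤ i → i ∉ I → ta i = a i ∧ tb i = b i)
    (htab_in : ∀ i ∈ I, Real.exp s * a i ≤ ta i ∧ Real.exp s * b i ≤ tb i)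
    (i₀ : ℕ) (hi₀ : 1 ≤ i₀)
    (hi₀I : ∀ i, 1 ≤ i → i ≤ i₀ → i ∉ I) (hi₀1 : i₀ + 1 ∈ I)
    (Δ2 Δ4 tΔ2 tΔ4 : ℕ → ℝ)
    (h20 : Δ2 0 = 1) (h40 : Δ4 0 = 1) (ht20 : tΔ2 0 = 1) (ht40 : tΔ4 0 = 1)
    (h2 : ∀ j, Δ2 (j + 1) = Δ2 j + d (j + 1) * Δ4 j)
    (h4 : ∀ j, Δ4 (j + 1) = a (j + 1) * Δ2 j + b (j + 1) * Δ4 j)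
    (ht2 : ∀ j, tΔ2 (j + 1) = tΔ2 j + d (j + 1) * tΔ4 j)
    (ht4 : ∀ j, tΔ4 (j + 1) = ta (j + 1) * tΔ2 j + tb (j + 1) * tΔ4 j) :
    ∃ t s' u v : ℕ → ℝ,
      (∀ i, i₀ < i → 0 ≤ t i) ∧
      (∀ i, i₀ ≤ i → 0 ≤ s' i) ∧
      s' i₀ = 0 ∧ u i₀ = 1 ∧
      (∀ i, i₀ ≤ i → u (i + 1) = Real.exp (t (i + 1)) * u i) ∧
      (∀ i, i₀ ≤ i → v i = Real.exp (s' i) * u i) ∧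
      (∀ i, i₀ ≤ i → 1 ≤ u i) ∧
      (∀ i, i₀ ≤ i → u i * Δ2 i ≤ tΔ2 i) ∧
      (∀ i, i₀ ≤ i → v i * Δ4 i ≤ tΔ4 i) ∧
      (∀ i, i₀ < i → t (i + 1) ≤ s' i) ∧
      (∀ i ∈ I, i₀ < i → s / 2 ≤ s' i) := by
  classical
  have hexp1 : (1 : ℝ) ≤ Real.exp s := by
    have := Real.one_le_exp_iff.mpr hs.le
    linarith
  -- positivity of the untilded sequences
  have hpos : ∀ i, 0 < Δ2 i ∧ 0 < Δ4 i := by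
    intro i
    induction i with
    | zero => constructor <;> simp [h20, h40]
    | succ j ih =>
      obtain ⟨h1, h2'⟩ := ih
      have hdj := hd (j + 1) (by omega)
      have haj := ha (j + 1) (by omega)
      constructor
      · rw [h2]; nlinarith
      · rw [h4, hb]; nlinarith
  -- the tilded sequences agree with the untilded ones up to `i₀`
  have hbase : ∀ j, j ≤ i₀ → tΔ2 j = Δ2 j ∧ tΔ4 j = Δ4 j := by
    intro j
    induction j with
    | zero => intro _; exact ⟨ht20.trans h20.symm, ht40.trans h40.symm⟩
    | succ k ih =>
      intro hk
      obtain ⟨e2, e4⟩ := ih (by omega)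
      have hnot : (k + 1) ∉ I := hi₀I (k + 1) (by omega) hk
      obtain ⟨ea, eb⟩ := htab_out (k + 1) (by omega) hnot
      exact ⟨by rw [ht2, e2, e4, h2], by rw [ht4, e2, e4, ea, eb, h4]⟩
  set c : ℕ → ℝ := fun i => if i ∈ I then Real.exp s else 1 with hcdef
  have hc1 : ∀ i, 1 ≤ c i := by
    intro i
    simp only [hcdef]
    split <;> [exact hexp1; exact le_refl 1]
  set P : ℕ → ℝ × ℝ := stmt12aux i₀ s I d a b Δ2 Δ4 with hPdef
  have hP0 : P 0 = (1, 1) := rfl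
  have hPsucc : ∀ n, P (n + 1) =
      ((P n).1 * (Δ2 (i₀ + n) + d (i₀ + n + 1) * (P n).2 * Δ4 (i₀ + n)) /
        (Δ2 (i₀ + n) + d (i₀ + n + 1) * Δ4 (i₀ + n)),
       c (i₀ + n + 1) *
        (a (i₀ + n + 1) * Δ2 (i₀ + n) + b (i₀ + n + 1) * (P n).2 * Δ4 (i₀ + n)) *
        (Δ2 (i₀ + n) + d (i₀ + n + 1) * Δ4 (i₀ + n)) /
        ((Δ2 (i₀ + n) + d (i₀ + n + 1) * (P n).2 * Δ4 (i₀ + n)) *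
          (a (i₀ + n + 1) * Δ2 (i₀ + n) + b (i₀ + n + 1) * Δ4 (i₀ + n)))) := by
    intro n
    simp only [hPdef, hcdef, stmt12aux]
  -- invariant
  have hinv : ∀ n, (1 ≤ (P n).1 ∧ 1 ≤ (P n).2 ∧
      (P n).1 * Δ2 (i₀ + n) ≤ tΔ2 (i₀ + n) ∧
      (P n).2 * (P n).1 * Δ4 (i₀ + n) ≤ tΔ4 (i₀ + n)) ∧
      ((P n).1 ≤ (P (n + 1)).1 ∧ (P (n + 1)).1 ≤ (P n).2 * (P n).1 ∧
        c (i₀ + n + 1) ≤ (P (n + 1)).2) := by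
    have key : ∀ n, (1 ≤ (P n).1 ∧ 1 ≤ (P n).2 ∧
        (P n).1 * Δ2 (i₀ + n) ≤ tΔ2 (i₀ + n) ∧
        (P n).2 * (P n).1 * Δ4 (i₀ + n) ≤ tΔ4 (i₀ + n)) →
        ((P n).1 ≤ (P (n + 1)).1 ∧ (P (n + 1)).1 ≤ (P n).2 * (P n).1 ∧
          c (i₀ + n + 1) ≤ (P (n + 1)).2 ∧
          (1 ≤ (P (n + 1)).1 ∧ 1 ≤ (P (n + 1)).2 ∧
            (P (n + 1)).1 * Δ2 (i₀ + n + 1) ≤ tΔ2 (i₀ + n + 1) ∧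
            (P (n + 1)).2 * (P (n + 1)).1 * Δ4 (i₀ + n + 1) ≤ tΔ4 (i₀ + n + 1))) := by
      intro n hInv
      obtain ⟨hu1, hE1, hI2, hI4⟩ := hInv
      obtain ⟨hx, hy⟩ := hpos (i₀ + n)
      obtain ⟨hdl, hdu⟩ := hd (i₀ + n + 1) (by omega)
      obtain ⟨hal, had⟩ := ha (i₀ + n + 1) (by omega)
      have hbeq := hb (i₀ + n + 1)
      set u := (P n).1 with hu
      set e := (P n).2 with he
      set x := Δ2 (i₀ + n) with hxd
      set y := Δ4 (i₀ + n) with hyd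
      set d' := d (i₀ + n + 1) with hd'
      set a' := a (i₀ + n + 1) with ha'
      set b' := b (i₀ + n + 1) with hb'
      set cc := c (i₀ + n + 1) with hcc
      have hP1 : (P (n + 1)).1 = u * (x + d' * e * y) / (x + d' * y) := by
        rw [hPsucc]
      have hP2 : (P (n + 1)).2 =
          cc * (a' * x + b' * e * y) * (x + d' * y) /
            ((x + d' * e * y) * (a' * x + b' * y)) := by
        rw [hPsucc]
      have hta : cc * a' ≤ ta (i₀ + n + 1) := by
        by_cases hIn : i₀ + n + 1 ∈ I
        · have := (htab_in _ hIn).1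
          rw [hcc, hcdef]
          simpa [hIn] using this
        · have := (htab_out _ (by omega) hIn).1
          rw [hcc, hcdef]
          simp [hIn, this, ha']
      have htb : cc * b' ≤ tb (i₀ + n + 1) := by
        by_cases hIn : i₀ + n + 1 ∈ I
        · have := (htab_in _ hIn).2
          rw [hcc, hcdef]
          simpa [hIn] using this
        · have := (htab_out _ (by omega) hIn).2
          rw [hcc, hcdef]
          simp [hIn, this, hb']
      have hcc1 : 1 ≤ cc := hc1 _
      have hΔ2succ : Δ2 (i₀ + n + 1) = x + d' * y := h2 (i₀ + n)
      have hΔ4succ : Δ4 (i₀ + n + 1) = a' * x + b' * y := h4 (i₀ + n)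
      have htΔ2succ : tΔ2 (i₀ + n + 1) = tΔ2 (i₀ + n) + d' * tΔ4 (i₀ + n) := ht2 (i₀ + n)
      have htΔ4succ : tΔ4 (i₀ + n + 1) =
          ta (i₀ + n + 1) * tΔ2 (i₀ + n) + tb (i₀ + n + 1) * tΔ4 (i₀ + n) := ht4 (i₀ + n)
      clear_value u e x y d' a' b' cc
      clear hu he hxd hyd hd' ha' hb' hcc
      have hd'0 : 0 < d' := lt_of_lt_of_le hd₀ hdl
      have hb'0 : 0 < b' := by
        have h1 : 0 < a' * d' := mul_pos hal hd'0
        rw [hbeq]; linarith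
      have he0 : (0:ℝ) < e := lt_of_lt_of_le one_pos hE1
      have hD1 : 0 < x + d' * y := add_pos hx (mul_pos hd'0 hy)
      have hD2 : 0 < x + d' * e * y := add_pos hx (mul_pos (mul_pos hd'0 he0) hy)
      have hD3 : 0 < a' * x + b' * y := add_pos (mul_pos hal hx) (mul_pos hb'0 hy)
      have hN : 0 < a' * x + b' * e * y :=
        add_pos (mul_pos hal hx) (mul_pos (mul_pos hb'0 he0) hy)
      have hu0 : 0 < u := lt_of_lt_of_le one_pos hu1
      have key2 : (x + d' * e * y) * (a' * x + b' * y) ≤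
          (a' * x + b' * e * y) * (x + d' * y) := by
        have hE1' : 0 ≤ e - 1 := by linarith
        nlinarith [mul_pos hx hy, mul_nonneg (mul_nonneg hE1' hx.le) hy.le]
      have hstep1 : u ≤ (P (n + 1)).1 := by
        rw [hP1, le_div_iff₀ hD1]
        nlinarith [mul_nonneg (mul_nonneg (mul_nonneg hu0.le hd'0.le) hy.le)
          (by linarith : (0:ℝ) ≤ e - 1)]
      have hstep2 : (P (n + 1)).1 ≤ e * u := by
        rw [hP1, div_le_iff₀ hD1]
        nlinarith [mul_nonneg (mul_nonneg hu0.le hx.le) (by linarith : (0:ℝ) ≤ e - 1)]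
      have hstep3 : cc ≤ (P (n + 1)).2 := by
        rw [hP2, le_div_iff₀ (mul_pos hD2 hD3)]
        nlinarith [mul_pos hD2 hD3]
      refine ⟨hstep1, hstep2, hstep3, le_trans hu1 hstep1, le_trans hcc1 hstep3, ?_, ?_⟩
      · -- Δ2 inequality at n+1
        have heq : (P (n + 1)).1 * Δ2 (i₀ + n + 1) = u * (x + d' * e * y) := by
          rw [hP1, hΔ2succ]
          field_simp
        rw [heq, htΔ2succ]
        nlinarith
      · -- Δ4 inequality at n+1
        have heq : (P (n + 1)).2 * (P (n + 1)).1 * Δ4 (i₀ + n + 1) =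
            cc * u * (a' * x + b' * e * y) := by
          rw [hP1, hP2, hΔ4succ]
          field_simp
        rw [heq, htΔ4succ]
        have h1 : cc * a' * (u * x) ≤ ta (i₀ + n + 1) * tΔ2 (i₀ + n) := by
          have hca : 0 < cc * a' := by positivity
          have h2' : 0 < u * x := by positivity
          calc cc * a' * (u * x) ≤ cc * a' * tΔ2 (i₀ + n) := by nlinarith
            _ ≤ ta (i₀ + n + 1) * tΔ2 (i₀ + n) := by nlinarith
        have h2'' : cc * b' * (e * u * y) ≤ tb (i₀ + n + 1) * tΔ4 (i₀ + n) := by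
          have hcb : 0 < cc * b' := by positivity
          have h4' : 0 < e * u * y := by positivity
          calc cc * b' * (e * u * y) ≤ cc * b' * tΔ4 (i₀ + n) := by nlinarith
            _ ≤ tb (i₀ + n + 1) * tΔ4 (i₀ + n) := by nlinarith
        nlinarith
    intro n
    induction n with
    | zero =>
      have hbase0 : 1 ≤ (P 0).1 ∧ 1 ≤ (P 0).2 ∧
          (P 0).1 * Δ2 (i₀ + 0) ≤ tΔ2 (i₀ + 0) ∧
          (P 0).2 * (P 0).1 * Δ4 (i₀ + 0) ≤ tΔ4 (i₀ + 0) := by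
        obtain ⟨e2, e4⟩ := hbase i₀ le_rfl
        simp [hP0, e2, e4]
      exact ⟨hbase0, ((key 0 hbase0).1), ((key 0 hbase0).2.1), ((key 0 hbase0).2.2.1)⟩
    | succ k ih =>
      have hk := (key k ih.1).2.2.2
      exact ⟨hk, (key (k + 1) hk).1, (key (k + 1) hk).2.1, (key (k + 1) hk).2.2.1⟩
  have hPpos : ∀ n, 0 < (P n).1 ∧ 0 < (P n).2 := fun n =>
    ⟨lt_of_lt_of_le one_pos (hinv n).1.1, lt_of_lt_of_le one_pos (hinv n).1.2.1⟩
  -- assemble the answer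
  refine ⟨fun i => Real.log ((P (i - i₀)).1 / (P (i - i₀ - 1)).1),
    fun i => Real.log ((P (i - i₀)).2),
    fun i => (P (i - i₀)).1,
    fun i => (P (i - i₀)).2 * (P (i - i₀)).1,
    ?_, ?_, ?_, ?_, ?_, ?_, ?_, ?_, ?_, ?_, ?_⟩
  · intro i hi
    obtain ⟨n, rfl⟩ : ∃ n, i = i₀ + n + 1 := ⟨i - i₀ - 1, by omega⟩
    have h1 : i₀ + n + 1 - i₀ = n + 1 := by omega
    have h2' : i₀ + n + 1 - i₀ - 1 = n := by omega
    simp only [h1, h2', Nat.add_sub_cancel]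
    apply Real.log_nonneg
    rw [le_div_iff₀ (hPpos n).1]
    have := (hinv n).2.1
    linarith
  · intro i hi
    exact Real.log_nonneg (hinv (i - i₀)).1.2.1
  · simp [hP0]
  · simp [hP0]
  · intro i hi
    obtain ⟨n, rfl⟩ : ∃ n, i = i₀ + n := ⟨i - i₀, by omega⟩
    have h1 : i₀ + n + 1 - i₀ = n + 1 := by omega
    have h2' : i₀ + n + 1 - i₀ - 1 = n := by omega
    have h3 : i₀ + n - i₀ = n := by omega
    simp only [h1, h2', h3, Nat.add_sub_cancel]
    rw [Real.exp_log (div_pos (hPpos (n + 1)).1 (hPpos n).1),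
      div_mul_cancel₀ _ (ne_of_gt (hPpos n).1)]
  · intro i hi
    simp only [Real.exp_log (hPpos (i - i₀)).2]
  · intro i hi
    exact (hinv (i - i₀)).1.1
  · intro i hi
    obtain ⟨n, rfl⟩ : ∃ n, i = i₀ + n := ⟨i - i₀, by omega⟩
    have h3 : i₀ + n - i₀ = n := by omega
    simp only [h3]
    exact (hinv n).1.2.2.1
  · intro i hi
    obtain ⟨n, rfl⟩ : ∃ n, i = i₀ + n := ⟨i - i₀, by omega⟩
    have h3 : i₀ + n - i₀ = n := by omega
    simp only [h3]
    exact (hinv n).1.2.2.2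
  · intro i hi
    obtain ⟨n, rfl⟩ : ∃ n, i = i₀ + n := ⟨i - i₀, by omega⟩
    have h1 : i₀ + n + 1 - i₀ = n + 1 := by omega
    have h2' : i₀ + n + 1 - i₀ - 1 = n := by omega
    have h3 : i₀ + n - i₀ = n := by omega
    simp only [h1, h2', h3, Nat.add_sub_cancel]
    apply Real.log_le_log (div_pos (hPpos (n + 1)).1 (hPpos n).1)
    rw [div_le_iff₀ (hPpos n).1]
    have := (hinv n).2.2.1
    linarith [mul_comm (P n).2 (P n).1]
  · intro i hiI hi
    obtain ⟨n, rfl⟩ : ∃ n, i = i₀ + n + 1 := ⟨i - i₀ - 1, by omega⟩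
    have h1 : i₀ + n + 1 - i₀ = n + 1 := by omega
    simp only [h1]
    have hcval : c (i₀ + n + 1) = Real.exp s := by simp [hcdef, hiI]
    have := (hinv n).2.2.2
    rw [hcval] at this
    have hlog : s ≤ Real.log ((P (n + 1)).2) := by
      have := Real.log_le_log (Real.exp_pos s) this
      rwa [Real.log_exp] at this
    linarith
end

section
/- Let k₀ ≥ 3 and let O₁, …, O_{k₀} be distinct points of ℝ³ lying in a common plane such that no three of them are collinear. Then there exists r̄ > 0 such that for every choice of radii r₁, …, r_{k₀} with 0 < r_i ≤ r̄ for each i, the closed balls K_i = closedBall(O_i, r_i) are pairwise disjoint and satisfy the no-eclipse condition (H): for all pairwise distinct indices i, j, l, the convex hull of K_i ∪ K_j has empty intersection with K_l. -/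
open RealInnerProductSpace Metric

theorem segment_isClosed {E : Type*} [NormedAddCommGroup E] [NormedSpace ℝ E] (a b : E) :
    IsClosed (segment ℝ a b) := by
  rw [segment_eq_image]
  exact (isCompact_Icc.image (by fun_prop)).isClosed

/-- For distinct coplanar points `O₁, …, O_{k₀}` in `ℝ³` (`k₀ ≥ 3`), no three of
which are collinear, there is `r̄ > 0` such that for all radii `0 < rᵢ ≤ r̄` the
closed balls `Kᵢ = closedBall(Oᵢ, rᵢ)` are pairwise disjoint and satisfy the
no-eclipse condition (H). -/
theorem stmt17 (k₀ : ℕ) (hk₀ : 3 ≤ k₀)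
    (O : Fin k₀ → EuclideanSpace ℝ (Fin 3))
    (hinj : Function.Injective O)
    (hplane : ∃ v : EuclideanSpace ℝ (Fin 3), v ≠ 0 ∧ ∃ c : ℝ, ∀ i, ⟪O i, v⟫ = c)
    (hcol : ∀ i j l : Fin k₀, i ≠ j → j ≠ l → i ≠ l →
      ¬ Collinear ℝ ({O i, O j, O l} : Set (EuclideanSpace ℝ (Fin 3)))) :
    ∃ rbar : ℝ, 0 < rbar ∧ ∀ r : Fin k₀ → ℝ, (∀ i, 0 < r i ∧ r i ≤ rbar) →
      (∀ i j : Fin k₀, i ≠ j →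
        Disjoint (closedBall (O i) (r i)) (closedBall (O j) (r j))) ∧
      (∀ i j l : Fin k₀, i ≠ j → j ≠ l → i ≠ l →
        convexHull ℝ (closedBall (O i) (r i) ∪ closedBall (O j) (r j)) ∩
          closedBall (O l) (r l) = ∅) := by
  haveI : Nonempty (Fin k₀) := ⟨⟨0, by omega⟩⟩
  -- the key fact: for distinct i j l, O l is not on the segment [O i, O j]
  have hnotmem : ∀ i j l : Fin k₀, i ≠ j → j ≠ l → i ≠ l →
      O l ∉ segment ℝ (O i) (O j) := by
    intro i j l hij hjl hil hmem
    apply hcol i j l hij hjl hil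
    have h1 : O l ∈ line[ℝ, O i, O j] :=
      (mem_segment_iff_wbtw.1 hmem).mem_affineSpan
    have h2 : Collinear ℝ ({O l, O i, O j} : Set (EuclideanSpace ℝ (Fin 3))) :=
      collinear_insert_of_mem_affineSpan_pair h1
    have hset : ({O i, O j, O l} : Set (EuclideanSpace ℝ (Fin 3))) = {O l, O i, O j} := by
      ext x; simp; tauto
    rwa [hset]
  have hinfpos : ∀ i j l : Fin k₀, i ≠ j → j ≠ l → i ≠ l →
      0 < infDist (O l) (segment ℝ (O i) (O j)) := by
    intro i j l hij hjl hil
    exact ((segment_isClosed (O i) (O j)).notMem_iff_infDist_pos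
      ⟨O i, left_mem_segment ℝ _ _⟩).1 (hnotmem i j l hij hjl hil)
  -- define the candidate radius
  set f : Fin k₀ × Fin k₀ → ℝ := fun p =>
    if p.1 ≠ p.2 then dist (O p.1) (O p.2) / 3 else 1 with hf
  set g : Fin k₀ × Fin k₀ × Fin k₀ → ℝ := fun p =>
    if p.1 ≠ p.2.1 ∧ p.2.1 ≠ p.2.2 ∧ p.1 ≠ p.2.2 then
      infDist (O p.2.2) (segment ℝ (O p.1) (O p.2.1)) / 3 else 1 with hg
  have hfpos : ∀ p, 0 < f p := by
    intro p
    simp only [hf]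
    split_ifs with h
    · have : O p.1 ≠ O p.2 := fun he => h (hinj he)
      have := dist_pos.2 this
      linarith
    · norm_num
  have hgpos : ∀ p, 0 < g p := by
    intro p
    simp only [hg]
    split_ifs with h
    · have := hinfpos p.1 p.2.1 p.2.2 h.1 h.2.1 h.2.2
      linarith
    · norm_num
  set rbar : ℝ := min (Finset.univ.inf' Finset.univ_nonempty f)
      (Finset.univ.inf' Finset.univ_nonempty g) with hrbar
  have hrbarpos : 0 < rbar := by
    apply lt_min
    · exact (Finset.lt_inf'_iff _).2 fun p _ => hfpos p
    · exact (Finset.lt_inf'_iff _).2 fun p _ => hgpos p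
  have hrbarf : ∀ p, rbar ≤ f p := fun p =>
    (min_le_left _ _).trans (Finset.inf'_le _ (Finset.mem_univ p))
  have hrbarg : ∀ p, rbar ≤ g p := fun p =>
    (min_le_right _ _).trans (Finset.inf'_le _ (Finset.mem_univ p))
  refine ⟨rbar, hrbarpos, fun r hr => ⟨?_, ?_⟩⟩
  · -- disjointness
    intro i j hij
    apply closedBall_disjoint_closedBall
    have h1 := hrbarf (i, j)
    simp only [hf, if_pos hij] at h1
    have h2 := (hr i).2
    have h3 := (hr j).2
    linarith
  · -- no-eclipse
    intro i j l hij hjl hil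
    have hkey := hrbarg (i, j, l)
    rw [hg] at hkey
    simp only [hij, hjl, hil, and_self, if_true, ne_eq, not_false_eq_true] at hkey
    ext x
    simp only [Set.mem_inter_iff, Set.mem_empty_iff_false, iff_false, not_and]
    intro hx hxl
    -- the hull is contained in the cthickening of the segment
    have hsub : convexHull ℝ (closedBall (O i) (r i) ∪ closedBall (O j) (r j)) ⊆
        cthickening rbar (segment ℝ (O i) (O j)) := by
      apply convexHull_min _ ((convex_segment _ _).cthickening rbar)
      rintro y (hy | hy)
      · exact mem_cthickening_of_dist_le y (O i) rbar _ (left_mem_segment ℝ _ _)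
          ((mem_closedBall.1 hy).trans (hr i).2)
      · exact mem_cthickening_of_dist_le y (O j) rbar _ (right_mem_segment ℝ _ _)
          ((mem_closedBall.1 hy).trans (hr j).2)
    have hx' : infDist x (segment ℝ (O i) (O j)) ≤ rbar := by
      have := mem_cthickening_iff.1 (hsub hx)
      exact ENNReal.toReal_le_of_le_ofReal hrbarpos.le this
    have htri : infDist (O l) (segment ℝ (O i) (O j)) ≤
        infDist x (segment ℝ (O i) (O j)) + dist (O l) x :=
      infDist_le_infDist_add_dist
    have hdl : dist (O l) x ≤ rbar := by
      rw [dist_comm]; exact (mem_closedBall.1 hxl).trans (hr l).2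
    linarith
end
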